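/- If |Γ'∖Γ| and |Δ| are disjoint sets of types, Γ',Δ is a context, and Γ ≤ Γ', then [Γ',Δ / Γ,Δ]T is bisimilar to [Γ'/Γ]T for every Böhm forest T. -/

import Mathlib

/-!  Formalization of proof search in the sequent calculus LJT (λ̄) with
coinductive Böhm trees/forests (as M-types), following Espírito Santo,
Matthes, Pinto, "A coinductive approach to proof search". -/

namespace LambdaBar

/-- Implicational formulas over atoms (natural numbers). -/
inductive Ty : Type
  | at : ℕ → Ty
  | imp : Ty → Ty → Ty
  deriving DecidableEq

/-- Contexts: finite lists of declarations `x : A`. -/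
abbrev Ctx := List (ℕ × Ty)

/-- A context declares no variable twice. -/
def IsCtx (Γ : Ctx) : Prop := (Γ.map Prod.fst).Nodup

/-- A (possibly redundant) list of declarations is functional, i.e. its
set of declarations is a context. -/
def FunCtx (Γ : Ctx) : Prop := ∀ x A A', (x, A) ∈ Γ → (x, A') ∈ Γ → A = A'

/-- `Ty.mkImp [B₁,…,Bₖ] p` is `B₁ ⊃ … ⊃ Bₖ ⊃ p`. -/
def Ty.mkImp : List Ty → ℕ → Ty
  | [], p => .at p
  | A :: As, p => .imp A (Ty.mkImp As p)

/-- The vector of premises of a formula: `(A⃗ ⊃ p).args = A⃗`. -/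
def Ty.args : Ty → List Ty
  | .at _ => []
  | .imp A B => A :: B.args

/-- The target atom of a formula: `(A⃗ ⊃ p).tgt = p`. -/
def Ty.tgt : Ty → ℕ
  | .at p => p
  | .imp _ B => B.tgt

/-- The set of types declared in a context: `|Γ|`. -/
def tyset (Γ : Ctx) : Finset Ty := (Γ.map Prod.snd).toFinset

/-- `Γ ≤ Γ'`: inclusion of contexts declaring the same set of types. -/
def CtxLe (Γ Γ' : Ctx) : Prop := Γ ⊆ Γ' ∧ tyset Γ = tyset Γ'

/-! ### Finite λ̄-terms -/

inductive Tm : Type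
  | lam : ℕ → Ty → Tm → Tm
  | app : ℕ → List Tm → Tm

/-- Inductive typing of finite λ̄-terms (cut-free system λ̄): rules
`RIntro` and `LVecIntro`. -/
inductive TypedTm : Ctx → Tm → Ty → Prop
  | rIntro {Γ : Ctx} {x : ℕ} {A B : Ty} {t : Tm} :
      TypedTm ((x, A) :: Γ) t B → TypedTm Γ (.lam x A t) (.imp A B)
  | lVecIntro {Γ : Ctx} {x : ℕ} {p : ℕ} {Bs : List Ty} {ts : List Tm} :
      (x, Ty.mkImp Bs p) ∈ Γ → ts.length = Bs.length →
      (∀ i t B, ts[(i : ℕ)]? = some t → Bs[(i : ℕ)]? = some B → TypedTm Γ t B) →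
      TypedTm Γ (.app x ts) (.at p)

/-- Renaming `[x/y]t` on finite terms (replacing free occurrences of `y` by
`x`, respecting shadowing). -/
def Tm.rename (x y : ℕ) : Tm → Tm
  | .lam z A t => .lam z A (if z = y then t else t.rename x y)
  | .app z ts => .app (if z = y then x else z) (ts.attach.map fun u => u.1.rename x y)
decreasing_by
  all_goals simp_wf
  all_goals try omega
  all_goals (have := List.sizeOf_lt_of_mem u.2; omega)

/-! ### Böhm trees (the coinductive terms of λ̄^co), as an M-type -/

/-- Polynomial functor for Böhm trees: a node is either a λ-abstraction
(one child) or an application `x⟨N₁,…,Nₖ⟩` (`k` children). -/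
def BTP : PFunctor.{0} :=
  ⟨Sum (ℕ × Ty) (ℕ × ℕ), fun a =>
    match a with
    | .inl _ => PUnit
    | .inr (_, k) => Fin k⟩

/-- Böhm trees, the (co)terms of system λ̄^co. -/
abbrev BTree : Type := BTP.M

def BTree.lam (x : ℕ) (A : Ty) (N : BTree) : BTree :=
  PFunctor.M.mk ⟨.inl (x, A), fun _ => N⟩

def BTree.app (x : ℕ) (Ns : List BTree) : BTree :=
  PFunctor.M.mk ⟨.inr (x, Ns.length), fun i => Ns.get i⟩

/-- Embedding of finite λ̄-terms into Böhm trees. -/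
def Tm.toBTree : Tm → BTree
  | .lam x A t => BTree.lam x A t.toBTree
  | .app x ts => BTree.app x (ts.attach.map fun u => u.1.toBTree)
decreasing_by
  all_goals simp_wf
  all_goals try omega
  all_goals (have := List.sizeOf_lt_of_mem u.2; omega)

/-- One step of the coinductive typing of Böhm trees: the rules `RIntro`
and `LVecIntro`, read backwards. -/
def TTStep (R : Ctx → BTree → Ty → Prop) (Γ : Ctx) (N : BTree) (A : Ty) : Prop :=
  match N.dest with
  | ⟨.inl (x, B), f⟩ => ∃ C, A = .imp B C ∧ R ((x, B) :: Γ) (f PUnit.unit) C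
  | ⟨.inr (x, k), f⟩ => ∃ p Bs, A = .at p ∧ (x, Ty.mkImp Bs p) ∈ Γ ∧
      Bs.length = k ∧ ∀ (i : Fin k) (B : Ty), Bs[i.val]? = some B → R Γ (f i) B

/-- Coinductive typing of Böhm trees (system λ̄^co): the greatest fixed point
of `TTStep`, i.e. the union of all relations closed backward w.r.t. the rules. -/
def CoTypedT (Γ : Ctx) (N : BTree) (A : Ty) : Prop :=
  ∃ R : Ctx → BTree → Ty → Prop,
    (∀ Γ' N' A', R Γ' N' A' → TTStep R Γ' N' A') ∧ R Γ N A

/-! ### Böhm forests (the coinductive terms of λ̄^co_Σ), as an M-type -/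

/-- Polynomial functor for Böhm forests: a node is either a λ-abstraction
(one child) or a finite sum of elimination alternatives, recorded as the
list of pairs (head variable, arity); a child is addressed by an
alternative index together with an argument position. -/
def BFP : PFunctor.{0} :=
  ⟨Sum (ℕ × Ty) (List (ℕ × ℕ)), fun a =>
    match a with
    | .inl _ => PUnit
    | .inr l => Σ i : Fin l.length, Fin (l.get i).2⟩

/-- Böhm forests, the terms of system λ̄^co_Σ. -/
abbrev BForest : Type := BFP.M

def BForest.lam (x : ℕ) (A : Ty) (N : BForest) : BForest :=
  PFunctor.M.mk ⟨.inl (x, A), fun _ => N⟩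

/-- The empty sum `O`. -/
def BForest.obot : BForest :=
  PFunctor.M.mk ⟨.inr [], fun c => absurd c.1.isLt (by simp)⟩

/-- Sum of elimination alternatives `Σᵢ xᵢ⟨Nᵢ₁,…⟩`. -/
def BForest.alts (Es : List (ℕ × List BForest)) : BForest :=
  PFunctor.M.mk ⟨.inr (Es.map fun e => (e.1, e.2.length)), fun c =>
    (((Es[c.1.val]?).bind fun e => e.2[c.2.val]?).getD BForest.obot)⟩

/-- A single elimination alternative `x⟨N₁,…,Nₖ⟩` as a forest. -/
def BForest.elim (x : ℕ) (Ns : List BForest) : BForest := BForest.alts [(x, Ns)]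

/-- A variable fresh for the domain of `Γ`. -/
def freshVar (Γ : Ctx) : ℕ := (Γ.map Prod.fst).foldr max 0 + 1

/-- The solution space `S(Γ ⊢ A)`, defined by corecursion:
`S(Γ ⊢ A⊃B) = λx^A. S(Γ,x:A ⊢ B)` (with `x` fresh) and
`S(Γ ⊢ p) = Σ_{(y:B⃗⊃p)∈Γ} y⟨S(Γ ⊢ Bⱼ)⟩ⱼ`. -/
def solSpace : Ctx × Ty → BForest :=
  PFunctor.M.corec fun s =>
    match s with
    | (Γ, .imp A B) => ⟨.inl (freshVar Γ, A), fun _ => ((freshVar Γ, A) :: Γ, B)⟩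
    | (Γ, .at p) =>
      let ds := Γ.filter fun d => d.2.tgt = p
      ⟨.inr (ds.map fun d => (d.1, d.2.args.length)), fun c =>
        match ds[c.1.val]? with
        | some d => (Γ, (d.2.args[c.2.val]?).getD (.at p))
        | none => (Γ, .at p)⟩

/-- One step of the coinductive typing of Böhm forests (system λ̄^co_Σ):
rules `RIntro`, `LVecIntro` and `Alts`, read backwards. -/
def TFStep (R : Ctx → BForest → Ty → Prop) (Γ : Ctx) (N : BForest) (A : Ty) : Prop :=
  match N.dest with
  | ⟨.inl (x, B), f⟩ => ∃ C, A = .imp B C ∧ R ((x, B) :: Γ) (f PUnit.unit) C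
  | ⟨.inr l, f⟩ => ∃ p, A = .at p ∧
      ∀ i : Fin l.length, ∃ Bs : List Ty,
        Bs.length = (l.get i).2 ∧ ((l.get i).1, Ty.mkImp Bs p) ∈ Γ ∧
        ∀ (j : Fin (l.get i).2) (B : Ty), Bs[j.val]? = some B → R Γ (f ⟨i, j⟩) B

/-- Coinductive typing of Böhm forests (system λ̄^co_Σ). -/
def CoTypedF (Γ : Ctx) (N : BForest) (A : Ty) : Prop :=
  ∃ R : Ctx → BForest → Ty → Prop,
    (∀ Γ' N' A', R Γ' N' A' → TFStep R Γ' N' A') ∧ R Γ N A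

/-- One step of the membership relation between Böhm trees and Böhm forests. -/
def MemStep (R : BTree → BForest → Prop) (M : BTree) (T : BForest) : Prop :=
  match M.dest, T.dest with
  | ⟨.inl xA, f⟩, ⟨.inl xA', g⟩ => xA = xA' ∧ R (f PUnit.unit) (g PUnit.unit)
  | ⟨.inr (x, k), f⟩, ⟨.inr l, g⟩ =>
      ∃ i : Fin l.length, (l.get i).1 = x ∧ (l.get i).2 = k ∧
        ∀ (j : Fin k) (j' : Fin (l.get i).2), j.val = j'.val → R (f j) (g ⟨i, j'⟩)
  | _, _ => False

/-- Coinductive membership `mem(M, T)` of a Böhm tree in a Böhm forest. -/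
def Mem (M : BTree) (T : BForest) : Prop :=
  ∃ R : BTree → BForest → Prop,
    (∀ M' T', R M' T' → MemStep R M' T') ∧ R M T

/-- One step of (plain, structural) bisimilarity of Böhm forests. -/
def BisimStep (R : BForest → BForest → Prop) (T U : BForest) : Prop :=
  match T.dest, U.dest with
  | ⟨.inl xA, f⟩, ⟨.inl xA', g⟩ => xA = xA' ∧ R (f PUnit.unit) (g PUnit.unit)
  | ⟨.inr l, f⟩, ⟨.inr l', g⟩ => l = l' ∧
      ∀ (i : Fin l.length) (i' : Fin l'.length) (j : Fin (l.get i).2)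
        (j' : Fin (l'.get i').2), i.val = i'.val → j.val = j'.val →
          R (f ⟨i, j⟩) (g ⟨i', j'⟩)
  | _, _ => False

/-- Bisimilarity `≅` of Böhm forests (not identifying sums up to permutation
or multiplicity). -/
def Bisim (T U : BForest) : Prop :=
  ∃ R : BForest → BForest → Prop,
    (∀ T' U', R T' U' → BisimStep R T' U') ∧ R T U

/-- One step of bisimilarity treating sums of elimination alternatives as
sets: each summand on either side is matched by a summand on the other. -/
def SBisimStep (R : BForest → BForest → Prop) (T U : BForest) : Prop :=
  match T.dest, U.dest with
  | ⟨.inl xA, f⟩, ⟨.inl xA', g⟩ => xA = xA' ∧ R (f PUnit.unit) (g PUnit.unit)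
  | ⟨.inr l, f⟩, ⟨.inr l', g⟩ =>
      (∀ i : Fin l.length, ∃ i' : Fin l'.length, l.get i = l'.get i' ∧
        ∀ (j : Fin (l.get i).2) (j' : Fin (l'.get i').2), j.val = j'.val →
          R (f ⟨i, j⟩) (g ⟨i', j'⟩)) ∧
      (∀ i' : Fin l'.length, ∃ i : Fin l.length, l.get i = l'.get i' ∧
        ∀ (j : Fin (l.get i).2) (j' : Fin (l'.get i').2), j.val = j'.val →
          R (f ⟨i, j⟩) (g ⟨i', j'⟩))
  | _, _ => False

/-- Bisimilarity `≈` of Böhm forests treating sums as sets of alternatives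
(i.e. up to associativity, commutativity and idempotence of `+`). -/
def SBisim (T U : BForest) : Prop :=
  ∃ R : BForest → BForest → Prop,
    (∀ T' U', R T' U' → SBisimStep R T' U') ∧ R T U

/-- Lookup of the type of a variable in a context. -/
def ctxLookup (Γ : Ctx) (z : ℕ) : Option Ty :=
  (Γ.find? fun d => d.1 = z).map Prod.snd

/-- Heads replacing a head variable `z` under co-contraction `[Γ'/Γ]`:
if `(z:A) ∈ Γ`, all `w` with `(w:A) ∈ {(z:A)} ∪ (Γ'∖Γ)`; otherwise just `z`. -/
def expandHeads (Γ Γ' : Ctx) (z : ℕ) : List ℕ :=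
  match ctxLookup Γ z with
  | some A => z :: ((Γ'.filter fun d => d ∉ Γ ∧ d.2 = A).map Prod.fst)
  | none => [z]

/-- Co-contraction `[Γ'/Γ]T` on Böhm forests (intended for `Γ ≤ Γ'`),
defined by corecursion. -/
def cocontract (Γ Γ' : Ctx) : BForest → BForest :=
  PFunctor.M.corec fun T =>
    match T.dest with
    | ⟨.inl xA, f⟩ => ⟨.inl xA, fun _ => f PUnit.unit⟩
    | ⟨.inr l, f⟩ =>
      let entries : List (ℕ × ℕ × Fin l.length) :=
        (List.finRange l.length).flatMap fun i =>
          (expandHeads Γ Γ' (l.get i).1).map fun w => (w, (l.get i).2, i)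
      ⟨.inr (entries.map fun e => (e.1, e.2.1)), fun c =>
        match entries[c.1.val]? with
        | some e =>
            if h : c.2.val < (l.get e.2.2).2 then f ⟨e.2.2, ⟨c.2.val, h⟩⟩ else T
        | none => T⟩

/-- Simultaneous renaming on Böhm trees: replaces every free occurrence of
a variable from `ys` by `x`, respecting shadowing by λ-binders; for
`ys = [x₁,…,xₙ]` and `x = x₁` this is the substitution `[x₁/x₁,…,xₙ]`. -/
def renameT (x : ℕ) (ys : List ℕ) (M : BTree) : BTree :=
  PFunctor.M.corec
    (fun s : BTree × List ℕ =>
      match s.1.dest with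
      | ⟨.inl (z, A), f⟩ => ⟨.inl (z, A), fun _ => (f PUnit.unit, s.2.filter (· ≠ z))⟩
      | ⟨.inr (z, k), f⟩ =>
          ⟨.inr (if z ∈ s.2 then x else z, k), fun j => (f j, s.2)⟩)
    (M, ys)

/-- One step of "variable `x` does not occur free in the forest `T`". -/
def NotFreeStep (R : ℕ → BForest → Prop) (x : ℕ) (T : BForest) : Prop :=
  match T.dest with
  | ⟨.inl (z, _), f⟩ => z = x ∨ R x (f PUnit.unit)
  | ⟨.inr l, f⟩ => (∀ e ∈ l, e.1 ≠ x) ∧ ∀ c, R x (f c)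

/-- `x ∉ FV(T)` for a Böhm forest, coinductively. -/
def NotFree (x : ℕ) (T : BForest) : Prop :=
  ∃ R : ℕ → BForest → Prop,
    (∀ x' T', R x' T' → NotFreeStep R x' T') ∧ R x T

/-- The special case `[x₁+⋯+xₙ/x₁]T` of co-contraction, where `xs` lists
`x₁,…,xₙ`: every application headed by `x₁` is replaced by the sum of the
applications headed by each `xᵢ`. -/
def cocontractVars (x₁ : ℕ) (xs : List ℕ) : BForest → BForest :=
  PFunctor.M.corec fun T =>
    match T.dest with
    | ⟨.inl xA, f⟩ => ⟨.inl xA, fun _ => f PUnit.unit⟩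
    | ⟨.inr l, f⟩ =>
      let entries : List (ℕ × ℕ × Fin l.length) :=
        (List.finRange l.length).flatMap fun i =>
          (if (l.get i).1 = x₁ then xs else [(l.get i).1]).map fun w =>
            (w, (l.get i).2, i)
      ⟨.inr (entries.map fun e => (e.1, e.2.1)), fun c =>
        match entries[c.1.val]? with
        | some e =>
            if h : c.2.val < (l.get e.2.2).2 then f ⟨e.2.2, ⟨c.2.val, h⟩⟩ else T
        | none => T⟩

/-- One step of "maximally co-contracted w.r.t. the (local) context `Θ`":
every head variable of a summand is declared in `Θ`, and for every variable
`y` with the same type in `Θ` the sum also contains a summand headed by `y`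
with bisimilar arguments; under a λ, the context is locally extended. -/
def MCCStep (R : Ctx → BForest → Prop) (Θ : Ctx) (T : BForest) : Prop :=
  match T.dest with
  | ⟨.inl (x, A), f⟩ => R ((x, A) :: Θ) (f PUnit.unit)
  | ⟨.inr l, f⟩ =>
      (∀ i : Fin l.length,
        (∃ A, ((l.get i).1, A) ∈ Θ) ∧
        ∀ (y : ℕ) (A : Ty), ((l.get i).1, A) ∈ Θ → (y, A) ∈ Θ →
          ∃ i' : Fin l.length, (l.get i').1 = y ∧ (l.get i').2 = (l.get i).2 ∧
            ∀ (j : Fin (l.get i).2) (j' : Fin (l.get i').2), j.val = j'.val →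
              Bisim (f ⟨i, j⟩) (f ⟨i', j'⟩)) ∧
      ∀ c, R Θ (f c)

/-- `T` is maximally co-contracted w.r.t. `Θ`, coinductively. -/
def MaxCoContracted (Θ : Ctx) (T : BForest) : Prop :=
  ∃ R : Ctx → BForest → Prop,
    (∀ Θ' T', R Θ' T' → MCCStep R Θ' T') ∧ R Θ T

/-! ### The finitary system λ̄^gfp_Σ -/

/-- Atomic sequents `Γ ⊢ p`. -/
structure ASeq : Type where
  ctx : Ctx
  tgt : ℕ

/-- `σ ≤ σ'` on atomic sequents: `Γ ≤ Γ'` and equal target atoms. -/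
def ASeqLe (σ σ' : ASeq) : Prop :=
  σ.ctx ⊆ σ'.ctx ∧ tyset σ.ctx = tyset σ'.ctx ∧ σ.tgt = σ'.tgt

/-- Finitary terms of λ̄^gfp_Σ: `N ::= λx^A.N | gfp X^σ.ΣᵢEᵢ | X^σ` with
`E ::= x⟨N₁,…,Nₖ⟩`; fixed-point variables are names (naturals) annotated
with atomic sequents. -/
inductive FTm : Type
  | lam : ℕ → Ty → FTm → FTm
  | fpvar : ℕ → ASeq → FTm
  | gfp : ℕ → ASeq → List (ℕ × List FTm) → FTm

/-- `λz₁^{A₁}…zₙ^{Aₙ}.t` for a list of declarations. -/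
def lams : Ctx → FTm → FTm
  | [], t => t
  | (x, A) :: r, t => .lam x A (lams r t)

/-- Fresh variables `z₁,…,zₙ` declared with the premises `As`, extending `Γ`. -/
def extArgs (Γ : Ctx) (As : List Ty) : Ctx :=
  (List.range As.length).zipWith (fun i A => (freshVar Γ + i, A)) As

/-- A fresh fixed-point variable name w.r.t. `Ξ`. -/
def freshFP (Ξ : List (ℕ × ASeq)) : ℕ := (Ξ.map Prod.fst).foldr max 0 + 1

/-- The side condition of the first clause of the definition of `F`:
for `C = A⃗ ⊃ p` and a declaration `X : (Θ ⊢ q)` of `Ξ`: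
`p = q`, `Θ ⊆ Γ` and `|Θ| = |Γ| ∪ {A₁,…,Aₙ}`. -/
def HitCond (Γ : Ctx) (As : List Ty) (p : ℕ) (e : ℕ × ASeq) : Prop :=
  e.2.tgt = p ∧ e.2.ctx ⊆ Γ ∧ tyset e.2.ctx = tyset Γ ∪ As.toFinset

/-- The recursion computing the finitary representation `F(Γ ⊢ C)(Ξ)`,
presented as an inductive graph relation: `FDef Γ C Ξ t` holds iff the
recursive computation of `F(Γ ⊢ C)(Ξ)` terminates with result `t`. -/
inductive FDef : Ctx → Ty → List (ℕ × ASeq) → FTm → Prop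
  | hit (Γ : Ctx) (C : Ty) (Ξ : List (ℕ × ASeq)) (i : ℕ) (e : ℕ × ASeq) :
      Ξ[i]? = some e → HitCond Γ C.args C.tgt e →
      (∀ i' e', i < i' → Ξ[i']? = some e' → ¬ HitCond Γ C.args C.tgt e') →
      FDef Γ C Ξ
        (lams (extArgs Γ C.args)
          (.fpvar e.1 ⟨Γ ++ extArgs Γ C.args, C.tgt⟩))
  | miss (Γ : Ctx) (C : Ty) (Ξ : List (ℕ × ASeq)) (alts : List (ℕ × List FTm)) :
      (∀ e ∈ Ξ, ¬ HitCond Γ C.args C.tgt e) →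
      alts.length =
        ((Γ ++ extArgs Γ C.args).filter fun d => d.2.tgt = C.tgt).length →
      (∀ (i : ℕ) (d : ℕ × Ty) (a : ℕ × List FTm),
        ((Γ ++ extArgs Γ C.args).filter fun d => d.2.tgt = C.tgt)[i]? = some d →
        alts[i]? = some a → a.1 = d.1) →
      (∀ (i : ℕ) (d : ℕ × Ty) (a : ℕ × List FTm),
        ((Γ ++ extArgs Γ C.args).filter fun d => d.2.tgt = C.tgt)[i]? = some d →
        alts[i]? = some a → a.2.length = d.2.args.length) →
      (∀ (i : ℕ) (d : ℕ × Ty) (a : ℕ × List FTm) (j : ℕ) (B : Ty) (t : FTm),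
        ((Γ ++ extArgs Γ C.args).filter fun d => d.2.tgt = C.tgt)[i]? = some d →
        alts[i]? = some a → d.2.args[j]? = some B → a.2[j]? = some t →
        FDef (Γ ++ extArgs Γ C.args) B
          (Ξ ++ [(freshFP Ξ, ⟨Γ ++ extArgs Γ C.args, C.tgt⟩)]) t) →
      FDef Γ C Ξ
        (lams (extArgs Γ C.args)
          (.gfp (freshFP Ξ) ⟨Γ ++ extArgs Γ C.args, C.tgt⟩ alts))

/-- Subformulas of a formula. -/
def Ty.subs : Ty → Finset Ty
  | .at p => {.at p}
  | .imp A B => insert (.imp A B) (A.subs ∪ B.subs)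

/-- A finite set of formulas is subformula-closed. -/
def SubClosed (𝒜 : Finset Ty) : Prop := ∀ A ∈ 𝒜, A.subs ⊆ 𝒜

/-- The `𝒜`-invariant for a sequent `Γ ⊢ C` and a vector `Ξ` of fixed-point
declarations `Xᵢ : (Θᵢ ⊢ qᵢ)`: (i) `|Γ| ∪ {C} ⊆ 𝒜`; (ii) `Θ₁ ⊆ … ⊆ Θₘ = Γ`;
(iii) each `qⱼ` is a subformula of a formula of `|Γ|`; (iv) the strippings
of the sequents of `Ξ` are pairwise distinct. -/
def AInvariant (𝒜 : Finset Ty) (Γ : Ctx) (C : Ty) (Ξ : List (ℕ × ASeq)) : Prop :=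
  (tyset Γ ∪ {C} ⊆ 𝒜) ∧
  (∀ (i : ℕ) (e e' : ℕ × ASeq), Ξ[i]? = some e → Ξ[i+1]? = some e' →
      e.2.ctx ⊆ e'.2.ctx) ∧
  (∀ e : ℕ × ASeq, Ξ.getLast? = some e → e.2.ctx = Γ) ∧
  (∀ e ∈ Ξ, ∃ A ∈ tyset Γ, (Ty.at e.2.tgt) ∈ A.subs) ∧
  (Ξ.map fun e => ((tyset e.2.ctx, e.2.tgt) : Finset Ty × ℕ)).Nodup

/-- `t` has no free occurrence of a fixed-point variable outside the list
`b` of bound names (recall that `gfp X^σ` binds all `X^{σ'}`). -/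
inductive FPClosed : List ℕ → FTm → Prop
  | lam {b x A t} : FPClosed b t → FPClosed b (.lam x A t)
  | fpvar {b X σ} : X ∈ b → FPClosed b (.fpvar X σ)
  | gfp {b X σ alts} : (∀ a ∈ alts, ∀ t ∈ a.2, FPClosed (X :: b) t) →
      FPClosed b (.gfp X σ alts)

/-- Environments for the interpretation: finite assignments of Böhm forests
to fixed-point variables typed by atomic sequents. -/
abbrev Env : Type := List (ℕ × ASeq × BForest)

def envLookup (ξ : Env) (X : ℕ) : Option (ASeq × BForest) :=
  (ξ.find? fun e => e.1 = X).map Prod.snd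

/-- The label of a sum node for a list of alternatives. -/
def altsLabel (alts : List (ℕ × List FTm)) : List (ℕ × ℕ) :=
  alts.map fun e => (e.1, e.2.length)

/-- One step of the interpretation relation `⟦t⟧_ξ = N` of finitary terms as
Böhm forests: `⟦λx^A.t⟧` commutes with λ; `⟦X^{σ'}⟧_ξ = [σ'/σ]ξ(X^σ)`
(co-contraction) for the unique binding of `X` in `ξ`; and
`⟦gfp X^σ.ΣᵢEᵢ⟧_ξ` is the forest `N` with `N = Σᵢ⟦Eᵢ⟧_{ξ∪[X^σ↦N]}`. -/
def InterpStep (R : FTm → Env → BForest → Prop) :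
    FTm → Env → BForest → Prop
  | .lam x A t, ξ, N =>
      ∃ g, N.dest = ⟨.inl (x, A), g⟩ ∧ R t ξ (g PUnit.unit)
  | .fpvar X σ', ξ, N =>
      ∃ (σ : ASeq) (M : BForest), envLookup ξ X = some (σ, M) ∧ ASeqLe σ σ' ∧
        N = cocontract σ.ctx σ'.ctx M
  | .gfp X σ alts, ξ, N =>
      ∃ g, N.dest = ⟨.inr (altsLabel alts), g⟩ ∧
        ∀ (c : Σ i : Fin (altsLabel alts).length, Fin ((altsLabel alts).get i).2)
          (a : ℕ × List FTm) (t : FTm),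
            alts[c.1.val]? = some a → a.2[c.2.val]? = some t →
              R t (ξ ++ [(X, σ, N)]) (g c)

/-- The interpretation relation `⟦t⟧_ξ = N`, coinductively
(as the greatest fixed point of `InterpStep`). -/
def Interp (t : FTm) (ξ : Env) (N : BForest) : Prop :=
  ∃ R : FTm → Env → BForest → Prop,
    (∀ t' ξ' N', R t' ξ' N' → InterpStep R t' ξ' N') ∧ R t ξ N

end LambdaBar

open LambdaBar

/-! Co-contraction acts on a forest only through the head-expansion map `expandHeads`, and
extending both contexts by `Δ` does not change that map. A head declared in `Γ` is looked up
in `Γ` first and keeps its alternatives, since no new declaration of `Γ'` can lie in `Δ`; a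
head `z : A` declared only in `Δ` gains no alternatives, since by disjointness no declaration
of `Γ' ∖ Γ` has type `A`. The two forests are therefore equal. -/

namespace LambdaBar

theorem Bisim.refl (T : BForest) : Bisim T T := by
  refine ⟨Eq, ?_, rfl⟩
  rintro U _ rfl
  unfold BisimStep
  obtain ⟨a, f⟩ := U.dest
  cases a with
  | inl xA => exact ⟨rfl, rfl⟩
  | inr l =>
    refine ⟨rfl, ?_⟩
    rintro i i' j j' hi hj
    obtain rfl : i = i' := Fin.ext hi
    obtain rfl : j = j' := Fin.ext hj
    rfl

theorem cocontract_eq_of_expandHeads_eq {Γ₁ Γ₁' Γ₂ Γ₂' : Ctx}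
    (h : ∀ z, expandHeads Γ₁ Γ₁' z = expandHeads Γ₂ Γ₂' z) :
    cocontract Γ₁ Γ₁' = cocontract Γ₂ Γ₂' := by
  unfold cocontract
  rw [funext h]

theorem ctxLookup_append (Γ Δ : Ctx) (z : ℕ) :
    ctxLookup (Γ ++ Δ) z = (ctxLookup Γ z).or (ctxLookup Δ z) := by
  unfold ctxLookup
  rw [List.find?_append]
  cases List.find? (fun d => d.1 = z) Γ <;> rfl

theorem mem_tyset {Γ : Ctx} {d : ℕ × Ty} (h : d ∈ Γ) : d.2 ∈ tyset Γ :=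
  List.mem_toFinset.mpr (List.mem_map_of_mem h)

theorem mem_tyset_of_ctxLookup_eq_some {Γ : Ctx} {z : ℕ} {A : Ty}
    (h : ctxLookup Γ z = some A) : A ∈ tyset Γ := by
  obtain ⟨d, hfind, rfl⟩ := Option.map_eq_some_iff.mp h
  exact mem_tyset (List.mem_of_find?_eq_some hfind)

section DisjointExtension

variable {Γ Γ' Δ : Ctx} (hdisj : Disjoint (tyset (Γ'.filter fun d => d ∉ Γ)) (tyset Δ))
include hdisj

theorem snd_notMem_tyset_of_disjoint {d : ℕ × Ty} (hd : d ∈ Γ') (hdΓ : d ∉ Γ) :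
    d.2 ∉ tyset Δ :=
  Finset.disjoint_left.mp hdisj (mem_tyset (List.mem_filter.mpr ⟨hd, by simpa using hdΓ⟩))

theorem filter_new_append_eq (A : Ty) :
    ((Γ' ++ Δ).filter fun d => d ∉ Γ ++ Δ ∧ d.2 = A) =
      Γ'.filter fun d => d ∉ Γ ∧ d.2 = A := by
  have hΔ : (Δ.filter fun d => d ∉ Γ ++ Δ ∧ d.2 = A) = [] :=
    List.filter_eq_nil_iff.mpr fun d hd h =>
      (of_decide_eq_true h).1 (List.mem_append_right _ hd)
  rw [List.filter_append, hΔ, List.append_nil]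
  refine List.filter_congr fun d hd => decide_eq_decide.mpr ?_
  simp only [List.mem_append, not_or, and_assoc]
  refine ⟨fun ⟨hΓ, _, hA⟩ => ⟨hΓ, hA⟩, fun ⟨hΓ, hA⟩ => ⟨hΓ, ?_, hA⟩⟩
  exact fun hdΔ => snd_notMem_tyset_of_disjoint hdisj hd hΓ (mem_tyset hdΔ)

theorem filter_new_eq_nil_of_mem_tyset {A : Ty} (hA : A ∈ tyset Δ) :
    (Γ'.filter fun d => d ∉ Γ ∧ d.2 = A) = [] :=
  List.filter_eq_nil_iff.mpr fun _ hd h =>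
    have ⟨hΓ, hdA⟩ := of_decide_eq_true h
    snd_notMem_tyset_of_disjoint hdisj hd hΓ (hdA ▸ hA)

theorem expandHeads_append_right (z : ℕ) :
    expandHeads (Γ ++ Δ) (Γ' ++ Δ) z = expandHeads Γ Γ' z := by
  unfold expandHeads
  rw [ctxLookup_append]
  cases hΓ : ctxLookup Γ z with
  | some A => simp only [Option.some_or, filter_new_append_eq hdisj]
  | none =>
    cases hΔ : ctxLookup Δ z with
    | none => rfl
    | some A =>
      simp only [Option.none_or, filter_new_append_eq hdisj,
        filter_new_eq_nil_of_mem_tyset hdisj (mem_tyset_of_ctxLookup_eq_some hΔ)]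
      rfl

end DisjointExtension

end LambdaBar

theorem cocontract_extension_disjoint_general (Γ Γ' Δ : Ctx) (T : BForest)
    (hdisj : Disjoint (tyset (Γ'.filter fun d => d ∉ Γ)) (tyset Δ)) :
    Bisim (cocontract (Γ ++ Δ) (Γ' ++ Δ) T) (cocontract Γ Γ' T) := by
  rw [cocontract_eq_of_expandHeads_eq (expandHeads_append_right hdisj)]
  exact Bisim.refl _

/-- Lemma 11: if `|Γ'∖Γ|` and `|Δ|` are disjoint,
`Γ',Δ` is a context, and `Γ ≤ Γ'`, then `[Γ',Δ/Γ,Δ]T ≅ [Γ'/Γ]T`. -/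
theorem cocontract_extension_disjoint (Γ Γ' Δ : Ctx) (T : BForest)
    (hdisj : Disjoint (tyset (Γ'.filter fun d => d ∉ Γ)) (tyset Δ))
    (hctx : IsCtx (Γ' ++ Δ)) (hle : CtxLe Γ Γ') :
    Bisim (cocontract (Γ ++ Δ) (Γ' ++ Δ) T) (cocontract Γ Γ' T) :=
  cocontract_extension_disjoint_general Γ Γ' Δ T hdisj
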